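/- Let Σ be a symmetric positive definite k×k real matrix with minimum eigenvalue γ_min. Suppose there exist I⁰ ∈ 𝓘 with 1 ∈ I⁰ and an integer n⁰ ≥ 1 such that the allocation equal to n⁰ on I⁰ and 0 elsewhere is within budget. If (n*, λ*) is a feasible pair minimizing R_Σ over all feasible pairs, then Σ_{I∈𝓘 : n*_I ≥ 1} (1/n*_I) ‖λ*_I‖₂² ≤ Σ_{11}/(n⁰ · γ_min). -/

import Mathlib

open Matrix

/-- The ℓ²→ℓ² operator (spectral) norm of a square real matrix. -/
noncomputable def opNorm {n : Type*} [Fintype n] [DecidableEq n] (A : Matrix n n ℝ) : ℝ :=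
  ‖LinearMap.toContinuousLinearMap (Matrix.toEuclideanLin A)‖

/-- The risk `R_A(n, λ) = ∑_{I ∈ 𝓘 : n_I ≥ 1} (1/n_I) λ_I^⊤ A λ_I`. -/
noncomputable def Risk {k : ℕ} (A : Matrix (Fin k) (Fin k) ℝ)
    (𝓘 : Finset (Finset (Fin k))) (n : Finset (Fin k) → ℕ)
    (lam : Finset (Fin k) → (Fin k → ℝ)) : ℝ :=
  ∑ I ∈ 𝓘, if 1 ≤ n I then (1 / (n I : ℝ)) * (lam I ⬝ᵥ (A *ᵥ lam I)) else 0

/-- A feasible pair `(n, λ)`: the allocation `n` is within budget componentwise, each `λ_I`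
is supported on `I`, `λ_I = 0` whenever `n_I = 0`, and `∑_{I∈𝓘} λ_I` equals the target
vector `e1` (the first standard basis vector). -/
def Feasible {k m : ℕ} (𝓘 : Finset (Finset (Fin k)))
    (c : Finset (Fin k) → Fin m → ℝ) (B : Fin m → ℝ) (e1 : Fin k → ℝ)
    (n : Finset (Fin k) → ℕ) (lam : Finset (Fin k) → (Fin k → ℝ)) : Prop :=
  (∀ ℓ : Fin m, ∑ I ∈ 𝓘, (n I : ℝ) * c I ℓ ≤ B ℓ) ∧
  (∀ I ∈ 𝓘, ∀ s, s ∉ I → lam I s = 0) ∧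
  (∀ I ∈ 𝓘, n I = 0 → lam I = 0) ∧
  (∑ I ∈ 𝓘, lam I = e1)

open scoped MatrixOrder

/-!
Bounding `Σ` below by `γ_min • 1` in the Loewner order bounds the risk `R_Σ` below by
`γ_min` times the risk `R_1`, which is the left-hand side. On the other hand the optimal risk is
at most the risk `Σ₁₁ / n⁰` of the feasible pair that spends `n⁰` samples on `I⁰` and puts all
of `e₁` there.
-/

lemma Matrix.IsHermitian.smul_one_le {n : Type*} [Fintype n] [DecidableEq n]
    {A : Matrix n n ℝ} (hA : A.IsHermitian) {γ : ℝ} (hγ : ∀ i, γ ≤ hA.eigenvalues i) :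
    γ • (1 : Matrix n n ℝ) ≤ A := by
  rw [← Algebra.algebraMap_eq_smul_one, algebraMap_le_iff_le_spectrum hA.isSelfAdjoint,
    hA.spectrum_real_eq_range_eigenvalues]
  rintro _ ⟨i, rfl⟩
  exact hγ i

section Risk

variable {k : ℕ} (𝓘 : Finset (Finset (Fin k))) (n : Finset (Fin k) → ℕ)
  (lam : Finset (Fin k) → (Fin k → ℝ))

lemma risk_mono {A A' : Matrix (Fin k) (Fin k) ℝ} (h : A ≤ A') :
    Risk A 𝓘 n lam ≤ Risk A' 𝓘 n lam := by
  refine Finset.sum_le_sum fun I _ => ?_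
  split_ifs
  · have := (le_iff.mp h).dotProduct_mulVec_nonneg (lam I)
    simp only [star_trivial, sub_mulVec, dotProduct_sub, sub_nonneg] at this
    gcongr
  · rfl

lemma risk_smul (γ : ℝ) (A : Matrix (Fin k) (Fin k) ℝ) :
    Risk (γ • A) 𝓘 n lam = γ * Risk A 𝓘 n lam := by
  simp only [Risk, Finset.mul_sum, smul_mulVec, dotProduct_smul, smul_eq_mul, mul_ite, mul_zero]
  congr! 2
  ring

lemma risk_one :
    Risk 1 𝓘 n lam =
      ∑ I ∈ 𝓘, if 1 ≤ n I then (1 / (n I : ℝ)) * ∑ s, (lam I s) ^ 2 else 0 := by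
  simp only [Risk, one_mulVec, dotProduct, sq]

end Risk

section Concentrated

variable {k m : ℕ} {𝓘 : Finset (Finset (Fin k))} {I0 : Finset (Fin k)} {e : Fin k} {n0 : ℕ}

lemma feasible_concentrated {c : Finset (Fin k) → Fin m → ℝ} {B : Fin m → ℝ}
    (hI0 : I0 ∈ 𝓘) (he : e ∈ I0) (hn0 : 1 ≤ n0)
    (hbudget : ∀ ℓ : Fin m,
      ∑ I ∈ 𝓘, (((if I = I0 then n0 else 0) : ℕ) : ℝ) * c I ℓ ≤ B ℓ) :
    Feasible 𝓘 c B (Pi.single e 1) (fun I => if I = I0 then n0 else 0)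
      (fun I => if I = I0 then Pi.single e 1 else 0) := by
  refine ⟨hbudget, fun I _ s hs => ?_, fun I _ hI => ?_, ?_⟩ <;> dsimp only at *
  · split_ifs with h
    · exact Pi.single_eq_of_ne (by rintro rfl; exact hs (h ▸ he)) 1
    · rfl
  · split_ifs at hI ⊢
    · exact absurd hI (by omega)
    · rfl
  · rw [Finset.sum_ite_eq' 𝓘 I0, if_pos hI0]

lemma risk_concentrated (A : Matrix (Fin k) (Fin k) ℝ) (hI0 : I0 ∈ 𝓘) :
    Risk A 𝓘 (fun I => if I = I0 then n0 else 0)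
      (fun I => if I = I0 then Pi.single e 1 else 0) = A e e / n0 := by
  rw [Risk, Finset.sum_eq_single_of_mem I0 hI0 fun I _ hI => by simp [hI]]
  rcases Nat.eq_zero_or_pos n0 with rfl | hn0
  · simp
  · simp [Nat.one_le_iff_ne_zero.mpr hn0.ne', mulVec_single, div_eq_inv_mul]

end Concentrated

theorem stmt4_general (k : ℕ) (hk : 0 < k) (m : ℕ)
    (𝓘 : Finset (Finset (Fin k)))
    (c : Finset (Fin k) → Fin m → ℝ)
    (B : Fin m → ℝ)
    (Sig : Matrix (Fin k) (Fin k) ℝ) (hSig : Sig.PosDef)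
    (γmin : ℝ) (hγmin : IsLeast (Set.range hSig.1.eigenvalues) γmin)
    (I0 : Finset (Fin k)) (hI0 : I0 ∈ 𝓘) (h1I0 : (⟨0, hk⟩ : Fin k) ∈ I0)
    (n0 : ℕ) (hn0 : 1 ≤ n0)
    (hbudget : ∀ ℓ : Fin m,
      ∑ I ∈ 𝓘, (((if I = I0 then n0 else 0) : ℕ) : ℝ) * c I ℓ ≤ B ℓ)
    (nstar : Finset (Fin k) → ℕ) (lamstar : Finset (Fin k) → (Fin k → ℝ))
    (hminstar : ∀ (n : Finset (Fin k) → ℕ) (lam : Finset (Fin k) → (Fin k → ℝ)),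
      Feasible 𝓘 c B (Pi.single (⟨0, hk⟩ : Fin k) 1) n lam →
        Risk Sig 𝓘 nstar lamstar ≤ Risk Sig 𝓘 n lam) :
    (∑ I ∈ 𝓘, if 1 ≤ nstar I then (1 / (nstar I : ℝ)) * ∑ s, (lamstar I s) ^ 2 else 0) ≤
      Sig ⟨0, hk⟩ ⟨0, hk⟩ / ((n0 : ℝ) * γmin) := by
  have hγpos : 0 < γmin := by
    obtain ⟨i, rfl⟩ := hγmin.1
    exact hSig.eigenvalues_pos i
  have hloewner : γmin • (1 : Matrix (Fin k) (Fin k) ℝ) ≤ Sig :=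
    hSig.1.smul_one_le fun i => hγmin.2 ⟨i, rfl⟩
  have hrisk : γmin * Risk 1 𝓘 nstar lamstar ≤ Sig ⟨0, hk⟩ ⟨0, hk⟩ / n0 :=
    calc γmin * Risk 1 𝓘 nstar lamstar
        = Risk (γmin • 1) 𝓘 nstar lamstar := (risk_smul _ _ _ _ _).symm
      _ ≤ Risk Sig 𝓘 nstar lamstar := risk_mono _ _ _ hloewner
      _ ≤ _ := hminstar _ _ (feasible_concentrated hI0 h1I0 hn0 hbudget)
      _ = Sig ⟨0, hk⟩ ⟨0, hk⟩ / n0 := risk_concentrated Sig hI0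
  rw [← risk_one, div_mul_eq_div_div, le_div_iff₀ hγpos, mul_comm]
  exact hrisk

theorem stmt4 (k : ℕ) (hk : 0 < k) (m : ℕ) (hm : 1 ≤ m)
    (𝓘 : Finset (Finset (Fin k))) (h𝓘 : ∀ I ∈ 𝓘, I.Nonempty)
    (c : Finset (Fin k) → Fin m → ℝ) (hc : ∀ I ∈ 𝓘, ∀ ℓ, 0 ≤ c I ℓ)
    (B : Fin m → ℝ) (hB : ∀ ℓ, 0 ≤ B ℓ)
    (Sig : Matrix (Fin k) (Fin k) ℝ) (hSig : Sig.PosDef)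
    (γmin : ℝ) (hγmin : IsLeast (Set.range hSig.1.eigenvalues) γmin)
    (I0 : Finset (Fin k)) (hI0 : I0 ∈ 𝓘) (h1I0 : (⟨0, hk⟩ : Fin k) ∈ I0)
    (n0 : ℕ) (hn0 : 1 ≤ n0)
    (hbudget : ∀ ℓ : Fin m,
      ∑ I ∈ 𝓘, (((if I = I0 then n0 else 0) : ℕ) : ℝ) * c I ℓ ≤ B ℓ)
    (nstar : Finset (Fin k) → ℕ) (lamstar : Finset (Fin k) → (Fin k → ℝ))
    (hfeasstar : Feasible 𝓘 c B (Pi.single (⟨0, hk⟩ : Fin k) 1) nstar lamstar)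
    (hminstar : ∀ (n : Finset (Fin k) → ℕ) (lam : Finset (Fin k) → (Fin k → ℝ)),
      Feasible 𝓘 c B (Pi.single (⟨0, hk⟩ : Fin k) 1) n lam →
        Risk Sig 𝓘 nstar lamstar ≤ Risk Sig 𝓘 n lam) :
    (∑ I ∈ 𝓘, if 1 ≤ nstar I then (1 / (nstar I : ℝ)) * ∑ s, (lamstar I s) ^ 2 else 0) ≤
      Sig ⟨0, hk⟩ ⟨0, hk⟩ / ((n0 : ℝ) * γmin) :=
  stmt4_general k hk m 𝓘 c B Sig hSig γmin hγmin I0 hI0 h1I0 n0 hn0 hbudget nstar lamstar hminstar
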